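/- For every γ ≥ 0, every integer n ≥ 1 and all integers x ≥ 0, y ≥ 1, the weighted half-space transition kernel has the explicit formula p_γ(n,x,y) = T(n, y−x) − T(n, y+x) + 2γ · ∑_{j=0}^{n−1} γ^j · ((y+x+j)/(n−j)) · T(n−j, y+x+j). -/

import Mathlib

open MeasureTheory Real

/-- A reflecting path of length `n` on `ℤ_{≥0}`: nearest-neighbour steps away from `0`,
and a forced step `0 → 1` from the origin. -/
def IsReflPath (n : ℕ) (S : Fin (n + 1) → ℕ) : Prop :=
  ∀ i : Fin n,
    (1 ≤ S i.castSucc → (S i.succ = S i.castSucc + 1 ∨ S i.succ + 1 = S i.castSucc)) ∧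
    (S i.castSucc = 0 → S i.succ = 1)

/-- The step weight `w(S) = ∏_{i=0}^{n-1} q(S_i)` with `q(0) = 1`, `q(z) = 1/2` for `z ≥ 1`. -/
noncomputable def pathWeight (n : ℕ) (S : Fin (n + 1) → ℕ) : ℝ :=
  ∏ i : Fin n, if S i.castSucc = 0 then (1 : ℝ) else (1 / 2 : ℝ)

/-- The number of visits to the origin `#{0 ≤ i ≤ n : S_i = 0}`. -/
def numZeros (n : ℕ) (S : Fin (n + 1) → ℕ) : ℕ :=
  (Finset.univ.filter (fun i : Fin (n + 1) => S i = 0)).card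

/-- The reflecting paths of length `n` from `x` to `y`. -/
def ReflPaths (n x y : ℕ) : Set (Fin (n + 1) → ℕ) :=
  {S | S 0 = x ∧ S (Fin.last n) = y ∧ IsReflPath n S}

/-- The weighted half-space transition kernel
`p_γ(n,x,y) = ∑_S γ^{#{0 ≤ i ≤ n : S_i = 0}} w(S)`, summing over reflecting paths of
length `n` from `x` to `y`. -/
noncomputable def pGamma (γ : ℝ) (n x y : ℕ) : ℝ :=
  ∑' S : ReflPaths n x y, γ ^ numZeros n S.1 * pathWeight n S.1

/-- `T(n,z) = 2^{-n} binom(n, (n+z)/2)` when `|z| ≤ n` and `z ≡ n (mod 2)`, else `0`. -/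
noncomputable def Tprob (n : ℕ) (z : ℤ) : ℝ :=
  if |z| ≤ (n : ℤ) ∧ ((n : ℤ) + z) % 2 = 0 then
    (2 : ℝ)⁻¹ ^ n * (n.choose (((n : ℤ) + z).toNat / 2) : ℝ)
  else 0

/-!
Conditioning on the penultimate position, `p_γ` is determined by its values at time `0` and the
recursion `p(n+1,x,y) = ½ p(n,x,y-1) + ½ p(n,x,y+1)` for `y ≥ 2`,
`p(n+1,x,1) = p(n,x,0) + ½ p(n,x,2)` and `p(n+1,x,0) = (γ/2) p(n,x,1)`. The right-hand side
satisfies the same recursion once it is extended to `y = 0` by `γ` times the boundary sum at `x`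
(plus `γ` when `n = x = 0`): `T(n,y-x) - T(n,y+x)` solves the free heat equation and is odd in
`y`, and by the hitting time theorem `z/m · T(m,z) = ½ (T(m-1,z-1) - T(m-1,z+1))` the boundary
sum is a superposition of first-passage probabilities, which solve the heat equation away from
the origin.
-/

open Finset

lemma Tprob_eq_ite (n : ℕ) (z : ℤ) : Tprob n z =
    if -(n : ℤ) ≤ z ∧ z ≤ n ∧ ((n : ℤ) + z) % 2 = 0 then
      (2 : ℝ)⁻¹ ^ n * (n.choose ((n + z).toNat / 2) : ℝ)
    else 0 := by
  simp only [Tprob, abs_le, and_assoc]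

lemma Tprob_neg (n : ℕ) (z : ℤ) : Tprob n (-z) = Tprob n z := by
  rw [Tprob_eq_ite, Tprob_eq_ite]
  by_cases h : -(n : ℤ) ≤ z ∧ z ≤ n ∧ ((n : ℤ) + z) % 2 = 0
  · rw [if_pos h, if_pos (by omega),
      show ((n : ℤ) + -z).toNat / 2 = n - ((n : ℤ) + z).toNat / 2 by omega,
      Nat.choose_symm (by omega)]
  · rw [if_neg h, if_neg (by omega)]

lemma Tprob_two_mul_sub (n k : ℕ) : Tprob n (2 * k - n) = 2⁻¹ ^ n * n.choose k := by
  rw [Tprob_eq_ite]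
  split_ifs with h
  · rw [show ((n : ℤ) + (2 * k - n)).toNat / 2 = k by omega]
  · rw [Nat.choose_eq_zero_of_lt (by omega), Nat.cast_zero, mul_zero]

lemma Tprob_zero_left (z : ℤ) : Tprob 0 z = if z = 0 then 1 else 0 := by
  rcases eq_or_ne z 0 with rfl | hz
  · simpa using Tprob_two_mul_sub 0 0
  · rw [Tprob_eq_ite, if_neg (by omega), if_neg hz]

lemma Tprob_eq_zero {n : ℕ} {z : ℤ} (h : ∀ k : ℕ, z ≠ 2 * k - n) : Tprob n z = 0 := by
  rw [Tprob_eq_ite, if_neg]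
  rintro ⟨h₁, -, h₂⟩
  exact h ((n + z).toNat / 2) (by omega)

lemma Tprob_succ (n : ℕ) (z : ℤ) :
    Tprob (n + 1) z = 2⁻¹ * Tprob n (z - 1) + 2⁻¹ * Tprob n (z + 1) := by
  by_cases hz : ∃ k : ℕ, z = 2 * k - (n + 1 : ℕ)
  · obtain ⟨k, rfl⟩ := hz
    rcases k with _ | k
    · rw [Tprob_eq_zero (z := _ - 1) (by omega),
        show (2 * ((0 : ℕ) : ℤ) - (n + 1 : ℕ)) + 1 = 2 * (0 : ℕ) - n by push_cast; ring,
        Tprob_two_mul_sub, Tprob_two_mul_sub]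
      simp only [pow_succ, inv_pow, Nat.choose_zero_right, Nat.cast_one, mul_one, mul_zero,
        zero_add]
      ring
    · rw [show (2 * ((k + 1 : ℕ) : ℤ) - (n + 1 : ℕ)) - 1 = 2 * k - n by push_cast; ring,
        show (2 * ((k + 1 : ℕ) : ℤ) - (n + 1 : ℕ)) + 1 = 2 * (k + 1 : ℕ) - n by
          push_cast; ring,
        Tprob_two_mul_sub, Tprob_two_mul_sub, Tprob_two_mul_sub, Nat.choose_succ_succ]
      push_cast
      ring
  · push Not at hz
    rw [Tprob_eq_zero hz,
      Tprob_eq_zero (fun k => by have := hz (k + 1); push_cast at this ⊢; omega),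
      Tprob_eq_zero (fun k => by have := hz k; push_cast at this ⊢; omega)]
    ring

lemma add_one_mul_choose_sub_choose (m k : ℕ) :
    ((m : ℝ) + 1) * ((m.choose k : ℝ) - m.choose (k + 1)) =
      (2 * k - m + 1) * (m + 1).choose (k + 1) := by
  have h₁ : ((m : ℝ) + 1) * m.choose k = (m + 1).choose (k + 1) * (k + 1) := by
    exact_mod_cast Nat.add_one_mul_choose_eq m k
  have h₂ : ((m + 1).choose (k + 1) : ℝ) = m.choose k + m.choose (k + 1) := by
    exact_mod_cast Nat.choose_succ_succ m k
  linear_combination 2 * h₁ + ((m : ℝ) + 1) * h₂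

/-- For `z > 0`, the probability that a simple random walk from `0` first hits `z` at time
`m + 1`. -/
noncomputable def firstPassage (m : ℕ) (z : ℤ) : ℝ :=
  2⁻¹ * (Tprob m (z - 1) - Tprob m (z + 1))

/-- The hitting time theorem. -/
lemma firstPassage_eq_div_mul_Tprob (m : ℕ) (z : ℤ) :
    firstPassage m z = (z : ℝ) / (m + 1) * Tprob (m + 1) z := by
  rw [firstPassage]
  wlog hz : 0 ≤ z generalizing z
  · have := this (-z) (by omega)
    rw [Tprob_neg, show -z - 1 = -(z + 1) by ring, show -z + 1 = -(z - 1) by ring,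
      Tprob_neg, Tprob_neg] at this
    push_cast at this
    linear_combination -this
  by_cases hk : ∃ k : ℕ, z = 2 * k - (m + 1 : ℕ)
  · obtain ⟨k, rfl⟩ := hk
    obtain ⟨k, rfl⟩ : ∃ j, k = j + 1 := ⟨k - 1, by omega⟩
    rw [show (2 * ((k + 1 : ℕ) : ℤ) - (m + 1 : ℕ)) - 1 = 2 * k - m by push_cast; ring,
      show (2 * ((k + 1 : ℕ) : ℤ) - (m + 1 : ℕ)) + 1 = 2 * (k + 1 : ℕ) - m by
        push_cast; ring,
      ← Nat.cast_succ, Tprob_two_mul_sub, Tprob_two_mul_sub, Tprob_two_mul_sub]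
    have := add_one_mul_choose_sub_choose m k
    rw [div_mul_eq_mul_div, eq_div_iff (by positivity)]
    push_cast
    linear_combination (2 : ℝ)⁻¹ ^ (m + 1) * this
  · push Not at hk
    rw [Tprob_eq_zero hk,
      Tprob_eq_zero (fun k => by have := hk (k + 1); push_cast at this ⊢; omega),
      Tprob_eq_zero (fun k => by have := hk k; push_cast at this ⊢; omega)]
    ring

lemma firstPassage_zero_left {z : ℤ} (hz : 0 ≤ z) :
    firstPassage 0 z = if z = 1 then 2⁻¹ else 0 := by
  rw [firstPassage, Tprob_zero_left, Tprob_zero_left]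
  split_ifs <;> first | omega | ring

lemma firstPassage_succ (m : ℕ) (z : ℤ) :
    firstPassage (m + 1) z = 2⁻¹ * firstPassage m (z - 1) + 2⁻¹ * firstPassage m (z + 1) := by
  simp only [firstPassage, Tprob_succ, sub_add_cancel, add_sub_cancel_right]
  ring

noncomputable def boundarySum (γ : ℝ) (n : ℕ) (s : ℤ) : ℝ :=
  ∑ j ∈ range n, γ ^ j * firstPassage (n - 1 - j) (s + j)

lemma boundarySum_succ_eq_add (γ : ℝ) (n : ℕ) (s : ℤ) :
    boundarySum γ (n + 1) s = firstPassage n s + γ * boundarySum γ n (s + 1) := by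
  simp only [boundarySum, sum_range_succ', mul_sum]
  rw [add_comm]
  congr 1
  · simp
  · refine sum_congr rfl fun j _ => ?_
    rw [show n + 1 - 1 - (j + 1) = n - 1 - j by omega, pow_succ]
    push_cast
    ring_nf

lemma boundarySum_succ (γ : ℝ) (n : ℕ) (s : ℤ) :
    boundarySum γ (n + 1) s =
      2⁻¹ * boundarySum γ n (s - 1) + 2⁻¹ * boundarySum γ n (s + 1) +
        γ ^ n * firstPassage 0 (s + n) := by
  simp only [boundarySum, sum_range_succ, mul_sum, ← sum_add_distrib, Nat.add_sub_cancel,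
    Nat.sub_self]
  congr 1
  refine sum_congr rfl fun j hj => ?_
  rw [show n - j = n - 1 - j + 1 by have := mem_range.mp hj; omega, firstPassage_succ,
    show s + j - 1 = s - 1 + j by ring, show s + j + 1 = s + 1 + j by ring]
  ring

noncomputable def kernelFormula (γ : ℝ) (n x y : ℕ) : ℝ :=
  if y = 0 then γ * boundarySum γ n x + if n = 0 ∧ x = 0 then γ else 0
  else Tprob n ((y : ℤ) - x) - Tprob n ((y : ℤ) + x) + 2 * γ * boundarySum γ n ((x : ℤ) + y)

lemma kernelFormula_zero (γ : ℝ) (x y : ℕ) :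
    kernelFormula γ 0 x y = if x = y then (if x = 0 then γ else 1) else 0 := by
  simp only [kernelFormula, boundarySum, range_zero, sum_empty, Tprob_zero_left]
  split_ifs <;> first | omega | simp_all

lemma kernelFormula_succ_zero (γ : ℝ) (n x : ℕ) :
    kernelFormula γ (n + 1) x 0 = γ * (2⁻¹ * kernelFormula γ n x 1) := by
  simp only [kernelFormula, if_pos, one_ne_zero, if_false, Nat.add_one_ne_zero, false_and,
    boundarySum_succ_eq_add, firstPassage]
  rw [show ((1 : ℕ) : ℤ) - x = -(x - 1) by push_cast; ring, Tprob_neg]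
  push_cast
  ring_nf

lemma kernelFormula_succ_one (γ : ℝ) (n x : ℕ) :
    kernelFormula γ (n + 1) x 1 = kernelFormula γ n x 0 + 2⁻¹ * kernelFormula γ n x 2 := by
  simp only [kernelFormula, one_ne_zero, two_ne_zero, if_true, if_false, boundarySum_succ,
    Tprob_succ]
  rw [firstPassage_zero_left (by positivity)]
  push_cast
  rw [show (1 : ℤ) - x - 1 = -x by ring, Tprob_neg]
  by_cases h : n = 0 ∧ x = 0
  · obtain ⟨rfl, rfl⟩ := h
    simp only [CharP.cast_eq_zero, sub_zero, Int.reduceAdd, add_zero, sub_self, zero_add, pow_zero,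
      ↓reduceIte, one_mul, and_self]
    ring
  · rw [if_neg h, if_neg (by omega)]
    ring_nf

lemma kernelFormula_succ_add_two (γ : ℝ) (n x y : ℕ) :
    kernelFormula γ (n + 1) x (y + 2) =
      2⁻¹ * kernelFormula γ n x (y + 1) + 2⁻¹ * kernelFormula γ n x (y + 3) := by
  simp only [kernelFormula, Nat.add_eq_zero_iff, OfNat.ofNat_ne_zero, one_ne_zero, and_false,
    if_false, boundarySum_succ, Tprob_succ,
    firstPassage_zero_left (by positivity : (0 : ℤ) ≤ x + (y + 2 : ℕ) + n)]
  rw [if_neg (by omega)]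
  push_cast
  ring_nf

lemma le_add_of_mem_reflPaths {n x y : ℕ} {S : Fin (n + 1) → ℕ} (hS : S ∈ ReflPaths n x y)
    (i : Fin (n + 1)) : S i ≤ x + i := by
  induction i using Fin.induction with
  | zero => simp [hS.1]
  | succ j ih =>
    obtain ⟨hstep, hzero⟩ := hS.2.2 j
    simp only [Fin.val_succ, Fin.val_castSucc] at ih ⊢
    rcases Nat.eq_zero_or_pos (S j.castSucc) with h | h
    · have := hzero h; omega
    · rcases hstep h with h' | h' <;> omega

lemma reflPaths_finite (n x y : ℕ) : (ReflPaths n x y).Finite :=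
  (Set.finite_Iic (fun _ => x + n)).subset fun _ hS i =>
    (le_add_of_mem_reflPaths hS i).trans (Nat.add_le_add_left (Nat.lt_succ_iff.mp i.isLt) x)

lemma pGamma_eq_sum (γ : ℝ) (n x y : ℕ) :
    pGamma γ n x y =
      ∑ S ∈ (reflPaths_finite n x y).toFinset, γ ^ numZeros n S * pathWeight n S := by
  rw [← Finset.tsum_subtype', Set.Finite.coe_toFinset]
  rfl

def ReflStep (a b : ℕ) : Prop :=
  (1 ≤ a → b = a + 1 ∨ b + 1 = a) ∧ (a = 0 → b = 1)

lemma reflStep_penultimate {n x y : ℕ} {S : Fin (n + 2) → ℕ}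
    (hS : S ∈ ReflPaths (n + 1) x y) :
    ReflStep (S (Fin.last n).castSucc) y := by
  have h := hS.2.2 (Fin.last n)
  rwa [Fin.succ_last, hS.2.1] at h

lemma init_mem_reflPaths {n x y : ℕ} {S : Fin (n + 2) → ℕ}
    (hS : S ∈ ReflPaths (n + 1) x y) :
    Fin.init S ∈ ReflPaths n x (S (Fin.last n).castSucc) :=
  ⟨hS.1, rfl, fun j => by simpa only [Fin.init, Fin.succ_castSucc] using hS.2.2 j.castSucc⟩

lemma snoc_mem_reflPaths {n x y' y : ℕ} {S : Fin (n + 1) → ℕ} (hS : S ∈ ReflPaths n x y')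
    (hstep : ReflStep y' y) : Fin.snoc S y ∈ ReflPaths (n + 1) x y := by
  refine ⟨?_, Fin.snoc_last _ _, fun i => ?_⟩
  · simpa only [← Fin.castSucc_zero, Fin.snoc_castSucc] using hS.1
  · induction i using Fin.lastCases with
    | last => rw [Fin.succ_last, Fin.snoc_last, Fin.snoc_castSucc, hS.2.1]; exact hstep
    | cast j => simpa only [Fin.succ_castSucc, Fin.snoc_castSucc] using hS.2.2 j

lemma pathWeight_snoc (n : ℕ) (S : Fin (n + 1) → ℕ) (y : ℕ) :
    pathWeight (n + 1) (Fin.snoc S y) =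
      pathWeight n S * if S (Fin.last n) = 0 then 1 else 1 / 2 := by
  simp only [pathWeight, Fin.prod_univ_castSucc, Fin.snoc_castSucc]

lemma numZeros_snoc (n : ℕ) (S : Fin (n + 1) → ℕ) (y : ℕ) :
    numZeros (n + 1) (Fin.snoc S y) = numZeros n S + if y = 0 then 1 else 0 := by
  simp only [numZeros, card_filter, Fin.sum_univ_castSucc, Fin.snoc_castSucc, Fin.snoc_last]

lemma sum_filter_penultimate_eq (γ : ℝ) {n x y' y : ℕ} (hstep : ReflStep y' y) :
    ∑ S ∈ (reflPaths_finite (n + 1) x y).toFinset with S (Fin.last n).castSucc = y',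
        γ ^ numZeros (n + 1) S * pathWeight (n + 1) S =
      (if y = 0 then γ else 1) * (if y' = 0 then 1 else 1 / 2) * pGamma γ n x y' := by
  rw [pGamma_eq_sum, mul_sum]
  refine sum_nbij' Fin.init (fun S => Fin.snoc S y) (fun S hS => ?_) (fun S hS => ?_)
    (fun S hS => ?_) (fun S _ => Fin.init_snoc _ _) (fun S hS => ?_)
  · simp only [mem_filter, Set.Finite.mem_toFinset] at hS ⊢
    simpa only [hS.2] using init_mem_reflPaths hS.1
  · simp only [mem_filter, Set.Finite.mem_toFinset] at hS ⊢
    exact ⟨snoc_mem_reflPaths hS hstep, by rw [Fin.snoc_castSucc, hS.2.1]⟩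
  · simp only [mem_filter, Set.Finite.mem_toFinset] at hS
    rw [← hS.1.2.1, Fin.snoc_init_self]
  · simp only [mem_filter, Set.Finite.mem_toFinset] at hS
    obtain ⟨⟨-, hlast, -⟩, hpen⟩ := hS
    have hpen : Fin.init S (Fin.last n) = y' := hpen
    rw [← Fin.snoc_init_self S, pathWeight_snoc, numZeros_snoc, Fin.init_snoc, hpen, hlast,
      pow_add]
    split_ifs <;> ring

lemma pGamma_succ_eq_sum (γ : ℝ) (n x y : ℕ) (t : Finset ℕ)
    (ht : ∀ y', ReflStep y' y ↔ y' ∈ t) :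
    pGamma γ (n + 1) x y =
      (if y = 0 then γ else 1) *
        ∑ y' ∈ t, (if y' = 0 then 1 else 1 / 2) * pGamma γ n x y' := by
  have hmaps (S) (hS : S ∈ (reflPaths_finite (n + 1) x y).toFinset) :
      S (Fin.last n).castSucc ∈ t :=
    (ht _).1 (reflStep_penultimate ((reflPaths_finite _ _ _).mem_toFinset.1 hS))
  rw [pGamma_eq_sum, ← sum_fiberwise_of_maps_to hmaps, mul_sum]
  refine sum_congr rfl fun y' hy' => ?_
  rw [sum_filter_penultimate_eq γ ((ht y').2 hy'), mul_assoc]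

lemma pGamma_zero (γ : ℝ) (x y : ℕ) :
    pGamma γ 0 x y = if x = y then (if x = 0 then γ else 1) else 0 := by
  rw [pGamma_eq_sum]
  by_cases h : x = y
  · subst h
    have hconst : ∀ S ∈ (reflPaths_finite 0 x x).toFinset, S = fun _ => x := fun S hS =>
      funext fun i => by rw [Fin.fin_one_eq_zero i]; exact ((Set.Finite.mem_toFinset _).1 hS).1
    have hmem : (fun _ => x) ∈ ReflPaths 0 x x := ⟨rfl, rfl, fun i => i.elim0⟩
    rw [sum_eq_single_of_mem _ ((Set.Finite.mem_toFinset _).2 hmem)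
      fun S hS hne => (hne (hconst S hS)).elim, if_pos rfl]
    split_ifs with h0 <;> simp [numZeros, pathWeight, h0]
  · rw [if_neg h]
    refine sum_eq_zero fun S hS => ?_
    obtain ⟨hstart, hend, -⟩ := (Set.Finite.mem_toFinset _).1 hS
    exact (h (hstart.symm.trans hend)).elim

lemma pGamma_succ_zero (γ : ℝ) (n x : ℕ) :
    pGamma γ (n + 1) x 0 = γ * (2⁻¹ * pGamma γ n x 1) := by
  rw [pGamma_succ_eq_sum γ n x 0 {1} fun y' => by rw [mem_singleton]; unfold ReflStep; omega]
  norm_num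

lemma pGamma_succ_one (γ : ℝ) (n x : ℕ) :
    pGamma γ (n + 1) x 1 = pGamma γ n x 0 + 2⁻¹ * pGamma γ n x 2 := by
  rw [pGamma_succ_eq_sum γ n x 1 {0, 2} fun y' => by
    rw [mem_insert, mem_singleton]; unfold ReflStep; omega]
  norm_num

lemma pGamma_succ_add_two (γ : ℝ) (n x y : ℕ) :
    pGamma γ (n + 1) x (y + 2) =
      2⁻¹ * pGamma γ n x (y + 1) + 2⁻¹ * pGamma γ n x (y + 3) := by
  rw [pGamma_succ_eq_sum γ n x (y + 2) {y + 1, y + 3} (fun y' => by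
    rw [mem_insert, mem_singleton]; unfold ReflStep; omega), sum_pair (by omega)]
  norm_num

lemma pGamma_eq_kernelFormula (γ : ℝ) (n x y : ℕ) :
    pGamma γ n x y = kernelFormula γ n x y := by
  induction n generalizing y with
  | zero => rw [pGamma_zero, kernelFormula_zero]
  | succ n ih =>
    match y with
    | 0 => rw [pGamma_succ_zero, kernelFormula_succ_zero, ih]
    | 1 => rw [pGamma_succ_one, kernelFormula_succ_one, ih, ih]
    | y + 2 => rw [pGamma_succ_add_two, kernelFormula_succ_add_two, ih, ih]

theorem pGamma_formula_general (γ : ℝ) (n : ℕ) (x y : ℕ) (hy : 1 ≤ y) :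
    pGamma γ n x y =
      Tprob n ((y : ℤ) - (x : ℤ)) - Tprob n ((y : ℤ) + (x : ℤ)) +
        2 * γ * ∑ j ∈ Finset.range n,
          γ ^ j * (((y : ℝ) + (x : ℝ) + (j : ℝ)) / ((n : ℝ) - (j : ℝ))) *
            Tprob (n - j) ((y : ℤ) + (x : ℤ) + (j : ℤ)) := by
  rw [pGamma_eq_kernelFormula, kernelFormula, if_neg (by omega), boundarySum, add_comm (x : ℤ)]
  congr 2
  refine sum_congr rfl fun j hj => ?_
  have hjn := mem_range.mp hj
  obtain ⟨m, hm⟩ : ∃ m, n - j = m + 1 := ⟨n - 1 - j, by omega⟩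
  have hmj : (m : ℝ) + 1 = n - j := by
    rw [← Nat.cast_sub hjn.le]
    exact_mod_cast hm.symm
  rw [show n - 1 - j = m by omega, firstPassage_eq_div_mul_Tprob, hm, hmj]
  push_cast
  ring

/-- Explicit formula for the weighted half-space transition kernel:
`p_γ(n,x,y) = T(n,y-x) - T(n,y+x) + 2γ ∑_{j=0}^{n-1} γ^j ((y+x+j)/(n-j)) T(n-j, y+x+j)`. -/
theorem pGamma_formula (γ : ℝ) (hγ : 0 ≤ γ) (n : ℕ) (hn : 1 ≤ n) (x y : ℕ) (hy : 1 ≤ y) :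
    pGamma γ n x y =
      Tprob n ((y : ℤ) - (x : ℤ)) - Tprob n ((y : ℤ) + (x : ℤ)) +
        2 * γ * ∑ j ∈ Finset.range n,
          γ ^ j * (((y : ℝ) + (x : ℝ) + (j : ℝ)) / ((n : ℝ) - (j : ℝ))) *
            Tprob (n - j) ((y : ℤ) + (x : ℤ) + (j : ℤ)) :=
  pGamma_formula_general γ n x y hy
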